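/- arXiv:2003.05835 — 3 statements merged into one kernel-verified Lean document; each statement's English description precedes it below -/
import Mathlib

section
/- Let k ≥ 1 be an integer and let u: (0,∞) → ℝ be continuously differentiable with lim_{r→0} u(r) = 0, lim_{r→∞} u(r) = π, and ∫₀^∞ (u'(r)² + k² sin²(u(r))/r²) r dr < ∞. Then ∫₀^∞ (u'(r)² + k² sin²(u(r))/r²) r dr ≥ 4k. -/
/-!
Bogomolny trick: by AM-GM the energy density dominates `2k |sin u · u'|`, which is the absolute
value of the derivative of `-2k cos u`. Integrating that derivative over `(0, ∞)` gives
`2k (cos 0 - cos π) = 4k`.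
-/

open Real MeasureTheory Filter Set Topology

theorem integral_Ioi_of_hasDerivAt_of_tendsto_nhdsGT {f f' : ℝ → ℝ} {a fa m : ℝ}
    (hderiv : ∀ x ∈ Ioi a, HasDerivAt f (f' x) x) (f'int : IntegrableOn f' (Ioi a))
    (ha : Tendsto f (𝓝[>] a) (𝓝 fa)) (hf : Tendsto f atTop (𝓝 m)) :
    ∫ x in Ioi a, f' x = m - fa := by
  have hcont : ContinuousWithinAt (Function.update f a fa) (Ici a) a := by
    rwa [← continuousWithinAt_Ioi_iff_Ici, continuousWithinAt_update_same,
      sdiff_singleton_eq_self self_notMem_Ioi]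
  have hderiv' : ∀ x ∈ Ioi a, HasDerivAt (Function.update f a fa) (f' x) x := fun x hx =>
    (hderiv x hx).congr_of_eventuallyEq <| by
      filter_upwards [isOpen_Ioi.mem_nhds hx] with y hy
      exact Function.update_of_ne (ne_of_gt hy) _ _
  have hf' : Tendsto (Function.update f a fa) atTop (𝓝 m) :=
    hf.congr' <| by
      filter_upwards [eventually_gt_atTop a] with y hy
      exact (Function.update_of_ne (ne_of_gt hy) _ _).symm
  simpa using integral_Ioi_of_hasDerivAt_of_tendsto hcont hderiv' f'int hf'

theorem integral_Ioi_const_mul_sin_comp_mul_deriv {u u' : ℝ → ℝ} {a α β : ℝ} (c : ℝ)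
    (hderiv : ∀ x ∈ Ioi a, HasDerivAt u (u' x) x)
    (hint : IntegrableOn (fun x => c * (sin (u x) * u' x)) (Ioi a))
    (ha : Tendsto u (𝓝[>] a) (𝓝 α)) (hb : Tendsto u atTop (𝓝 β)) :
    ∫ x in Ioi a, c * (sin (u x) * u' x) = c * (cos α - cos β) := by
  have hderiv' : ∀ x ∈ Ioi a,
      HasDerivAt (fun y => -c * cos (u y)) (c * (sin (u x) * u' x)) x := fun x hx =>
    ((hderiv x hx).cos.const_mul (-c)).congr_deriv (by ring)
  have hlim : ∀ {l : Filter ℝ} {γ : ℝ}, Tendsto u l (𝓝 γ) →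
      Tendsto (fun y => -c * cos (u y)) l (𝓝 (-c * cos γ)) := fun h =>
    ((continuous_cos.tendsto _).comp h).const_mul _
  rw [integral_Ioi_of_hasDerivAt_of_tendsto_nhdsGT hderiv' hint (hlim ha) (hlim hb)]
  ring

theorem abs_two_mul_mul_mul_le {r : ℝ} (hr : 0 < r) (K s c : ℝ) :
    |2 * K * (s * c)| ≤ (c ^ 2 + K ^ 2 * s ^ 2 / r ^ 2) * r := by
  have hdens : (c ^ 2 + K ^ 2 * s ^ 2 / r ^ 2) * r = (c ^ 2 * r ^ 2 + K ^ 2 * s ^ 2) / r := by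
    field_simp
  rw [hdens, le_div_iff₀ hr, abs_mul, abs_mul, abs_mul, abs_two]
  nlinarith [sq_nonneg (|c| * r - |K| * |s|), sq_abs c, sq_abs s, sq_abs K]

theorem stmt4_general (k : ℕ) (u : ℝ → ℝ)
    (hu : ContDiffOn ℝ 1 u (Set.Ioi 0))
    (h0 : Filter.Tendsto u (nhdsWithin 0 (Set.Ioi 0)) (nhds 0))
    (hInf : Filter.Tendsto u Filter.atTop (nhds π))
    (hE : IntegrableOn
      (fun r : ℝ => ((deriv u r) ^ 2 + k ^ 2 * Real.sin (u r) ^ 2 / r ^ 2) * r)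
      (Set.Ioi 0)) :
    (4 : ℝ) * k ≤ ∫ r in Set.Ioi (0 : ℝ),
        ((deriv u r) ^ 2 + k ^ 2 * Real.sin (u r) ^ 2 / r ^ 2) * r := by
  have hderiv : ∀ r ∈ Ioi (0 : ℝ), HasDerivAt u (deriv u r) r := fun r hr =>
    ((hu.differentiableOn one_ne_zero).differentiableAt (isOpen_Ioi.mem_nhds hr)).hasDerivAt
  have hbound : ∀ r ∈ Ioi (0 : ℝ), |2 * k * (sin (u r) * deriv u r)| ≤
      ((deriv u r) ^ 2 + k ^ 2 * sin (u r) ^ 2 / r ^ 2) * r := fun r hr =>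
    abs_two_mul_mul_mul_le hr _ _ _
  have hcont : ContinuousOn (fun r => 2 * k * (sin (u r) * deriv u r)) (Ioi 0) :=
    continuousOn_const.mul ((continuous_sin.comp_continuousOn hu.continuousOn).mul
      (hu.continuousOn_deriv_of_isOpen isOpen_Ioi le_rfl))
  have hint : IntegrableOn (fun r => 2 * k * (sin (u r) * deriv u r)) (Ioi 0) :=
    hE.mono' (hcont.aestronglyMeasurable measurableSet_Ioi)
      ((ae_restrict_iff' measurableSet_Ioi).2 (ae_of_all _ hbound))
  calc (4 : ℝ) * k = ∫ r in Ioi 0, 2 * k * (sin (u r) * deriv u r) := by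
        rw [integral_Ioi_const_mul_sin_comp_mul_deriv _ hderiv hint h0 hInf, cos_zero, cos_pi]
        ring
    _ ≤ _ := setIntegral_mono_on hint hE measurableSet_Ioi fun r hr =>
        (le_abs_self _).trans (hbound r hr)

theorem stmt4 (k : ℕ) (hk : 1 ≤ k) (u : ℝ → ℝ)
    (hu : ContDiffOn ℝ 1 u (Set.Ioi 0))
    (h0 : Filter.Tendsto u (nhdsWithin 0 (Set.Ioi 0)) (nhds 0))
    (hInf : Filter.Tendsto u Filter.atTop (nhds π))
    (hE : IntegrableOn
      (fun r : ℝ => ((deriv u r) ^ 2 + k ^ 2 * Real.sin (u r) ^ 2 / r ^ 2) * r)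
      (Set.Ioi 0)) :
    (4 : ℝ) * k ≤ ∫ r in Set.Ioi (0 : ℝ),
        ((deriv u r) ^ 2 + k ^ 2 * Real.sin (u r) ^ 2 / r ^ 2) * r :=
  stmt4_general k u hu h0 hInf hE
end

section
/- For every integer k ≥ 1 and every w ∈ C_c^∞((0,∞)), ∫₀^∞ (w'(r)² + k²·cos(2Q(r))/r² · w(r)²) r dr ≥ 0, where Q(r) = 2 arctan(r^k). -/
open Real MeasureTheory

theorem stmt9 (k : ℕ) (hk : 1 ≤ k) (w : ℝ → ℝ)
    (hw : ContDiff ℝ (⊤ : ℕ∞) w) (hsupp : HasCompactSupport w)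
    (hpos : tsupport w ⊆ Set.Ioi 0) :
    0 ≤ ∫ r in Set.Ioi (0 : ℝ),
        ((deriv w r) ^ 2
          + k ^ 2 * Real.cos (2 * (2 * Real.arctan (r ^ k))) / r ^ 2 * (w r) ^ 2) * r := by
  have hwd : Differentiable ℝ w := hw.differentiable (by simp)
  have hw'c : Continuous (deriv w) := hw.continuous_deriv (by simp)
  -- denominator positivity
  have hden : ∀ r : ℝ, 0 < 1 + r ^ (2 * k) := by
    intro r
    have : r ^ (2 * k) = (r ^ k) ^ 2 := by rw [mul_comm, pow_mul]
    rw [this]; positivity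
  set c : ℝ → ℝ := fun r => (k : ℝ) * (1 - r ^ (2 * k)) / (1 + r ^ (2 * k)) with hc
  set G : ℝ → ℝ := fun r => c r * (w r * w r) with hGdef
  set P : ℝ → ℝ := fun r => (deriv w r - c r * w r / r) ^ 2 * r with hPdef
  -- smoothness of c and G
  have hcd : ContDiff ℝ (⊤ : ℕ∞) c := by
    apply ContDiff.div
    · exact contDiff_const.mul (contDiff_const.sub (contDiff_id.pow _))
    · exact contDiff_const.add (contDiff_id.pow _)
    · exact fun r => ne_of_gt (hden r)
  have hGc : ContDiff ℝ (⊤ : ℕ∞) G := hcd.mul (hw.mul hw)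
  -- derivative of G
  have hGderiv : ∀ r : ℝ, deriv G r
      = (((k : ℝ) * (0 - (2 * k : ℕ) * r ^ (2 * k - 1)) * (1 + r ^ (2 * k))
          - (k : ℝ) * (1 - r ^ (2 * k)) * (0 + (2 * k : ℕ) * r ^ (2 * k - 1)))
          / (1 + r ^ (2 * k)) ^ 2) * (w r * w r)
        + c r * (deriv w r * w r + w r * deriv w r) := by
    intro r
    have hpow : HasDerivAt (fun x : ℝ => x ^ (2 * k)) ((2 * k : ℕ) * r ^ (2 * k - 1)) r :=
      hasDerivAt_pow (2 * k) r
    have hnum : HasDerivAt (fun x : ℝ => (k : ℝ) * (1 - x ^ (2 * k)))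
        ((k : ℝ) * (0 - (2 * k : ℕ) * r ^ (2 * k - 1))) r :=
      ((hasDerivAt_const r (1 : ℝ)).sub hpow).const_mul _
    have hdenD : HasDerivAt (fun x : ℝ => 1 + x ^ (2 * k))
        ((0 + (2 * k : ℕ) * r ^ (2 * k - 1))) r :=
      (hasDerivAt_const r (1 : ℝ)).add hpow
    have hcD : HasDerivAt c
        (((k : ℝ) * (0 - (2 * k : ℕ) * r ^ (2 * k - 1)) * (1 + r ^ (2 * k))
          - (k : ℝ) * (1 - r ^ (2 * k)) * (0 + (2 * k : ℕ) * r ^ (2 * k - 1)))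
          / (1 + r ^ (2 * k)) ^ 2) r :=
      hnum.div hdenD (ne_of_gt (hden r))
    have hwD : HasDerivAt w (deriv w r) r := (hwd r).hasDerivAt
    have : HasDerivAt G
        ((((k : ℝ) * (0 - (2 * k : ℕ) * r ^ (2 * k - 1)) * (1 + r ^ (2 * k))
          - (k : ℝ) * (1 - r ^ (2 * k)) * (0 + (2 * k : ℕ) * r ^ (2 * k - 1)))
          / (1 + r ^ (2 * k)) ^ 2) * (w r * w r)
        + c r * (deriv w r * w r + w r * deriv w r)) r := hcD.mul (hwD.mul hwD)
    exact this.deriv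
  -- w and its derivative vanish outside the support
  have hw0 : ∀ r ∉ tsupport w, w r = 0 := fun r hr => image_eq_zero_of_notMem_tsupport hr
  have hw'0 : ∀ r ∉ tsupport w, deriv w r = 0 := by
    intro r hr
    by_contra h
    exact hr (support_deriv_subset (by simpa using h))
  -- compact supports
  have hGcs : HasCompactSupport G := by
    apply HasCompactSupport.intro hsupp
    intro r hr
    simp [hGdef, hw0 r hr]
  have hPcs : HasCompactSupport P := by
    apply HasCompactSupport.intro hsupp
    intro r hr
    simp [hPdef, hw0 r hr, hw'0 r hr]
  -- continuity of P
  have hPcont : Continuous P := by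
    rw [continuous_iff_continuousAt]
    intro r
    by_cases hr : r ∈ tsupport w
    · have hr0 : r ≠ 0 := ne_of_gt (hpos hr)
      have hqc : ContinuousAt (fun x : ℝ => c x * w x / x) r := by
        apply ContinuousAt.div
        · exact ((hcd.continuous.continuousAt).mul hw.continuous.continuousAt)
        · exact continuousAt_id
        · exact hr0
      exact ((hw'c.continuousAt.sub hqc).pow 2).mul continuousAt_id
    · have hmem : (tsupport w)ᶜ ∈ nhds r :=
        (isClosed_tsupport w).isOpen_compl.mem_nhds hr
      have heq : P =ᶠ[nhds r] fun _ => (0 : ℝ) := by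
        filter_upwards [hmem] with x hx
        simp [hPdef, hw0 x hx, hw'0 x hx]
      exact heq.continuousAt
  -- the pointwise identity on (0, ∞)
  have hkey : ∀ r ∈ Set.Ioi (0 : ℝ),
      ((deriv w r) ^ 2
        + k ^ 2 * Real.cos (2 * (2 * Real.arctan (r ^ k))) / r ^ 2 * (w r) ^ 2) * r
      = P r + deriv G r := by
    intro r hr
    have hr0 : (0 : ℝ) < r := hr
    have hrne : r ≠ 0 := ne_of_gt hr0
    set s : ℝ := r ^ k with hs
    have hs2 : r ^ (2 * k) = s ^ 2 := by rw [mul_comm, pow_mul]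
    have hs1 : r ^ (2 * k - 1) = s ^ 2 / r := by
      rw [eq_div_iff hrne, ← pow_succ, ← hs2]
      congr 1
      omega
    have hone : (0 : ℝ) < 1 + s ^ 2 := by positivity
    have hcos2 : Real.cos (2 * Real.arctan s) = (1 - s ^ 2) / (1 + s ^ 2) := by
      rw [Real.cos_two_mul, Real.cos_sq_arctan]
      field_simp
      ring
    have hcos : Real.cos (2 * (2 * Real.arctan s)) = 1 - 8 * s ^ 2 / (1 + s ^ 2) ^ 2 := by
      rw [Real.cos_two_mul, hcos2]
      field_simp
      ring
    rw [hGderiv r, hcos]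
    simp only [hPdef, hc, hs2, hs1]
    have honene : (1 + s ^ 2) ≠ 0 := ne_of_gt hone
    field_simp
    push_cast
    ring
  -- integrability
  have hPint : IntegrableOn P (Set.Ioi (0 : ℝ)) :=
    (hPcont.integrable_of_hasCompactSupport hPcs).integrableOn
  have hGdc : Continuous (deriv G) := hGc.continuous_deriv (by simp)
  have hGint : IntegrableOn (deriv G) (Set.Ioi (0 : ℝ)) :=
    (hGdc.integrable_of_hasCompactSupport hGcs.deriv).integrableOn
  -- rewrite the integral
  rw [setIntegral_congr_fun measurableSet_Ioi hkey]
  rw [integral_add hPint hGint]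
  have hG0 : ∫ r in Set.Ioi (0 : ℝ), deriv G r = 0 := by
    rw [HasCompactSupport.integral_Ioi_deriv_eq (hGc.of_le (by simp)) hGcs 0]
    have h0 : (0 : ℝ) ∉ tsupport w := fun h => lt_irrefl 0 (Set.mem_Ioi.mp (hpos h))
    simp [hGdef, hw0 0 h0]
  rw [hG0, add_zero]
  apply setIntegral_nonneg measurableSet_Ioi
  intro r hr
  exact mul_nonneg (sq_nonneg _) (le_of_lt hr)
end

section
/- Let u: (0,∞) → ℝ be continuously differentiable with ∫₀^∞ (u'(r)² + sin²(u(r))/r²) r dr < ∞. Then the limit L₀ = lim_{r→0⁺} u(r) exists, the limit L_∞ = lim_{r→∞} u(r) exists, and both L₀ and L_∞ are integer multiples of π. -/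
/-!
Put `G x = ∫₀ˣ |sin s| ds`, an increasing homeomorphism of `ℝ`. By AM–GM,
`|(G ∘ u)'| = |sin u| |u'| ≤ ½ (u'² + sin² u / r²) r`, so `(G ∘ u)'` is integrable on `(0, ∞)`:
hence `G ∘ u`, and with it `u`, has limits at `0⁺` and at `∞`. If `sin L ≠ 0` at either end,
`sin² u / r` is bounded below there by a multiple of `1 / r`, which is not integrable at that end.
-/

open Real MeasureTheory Set Filter Topology intervalIntegral

noncomputable def absSinPrimitive (x : ℝ) : ℝ := ∫ s in (0 : ℝ)..x, |sin s|

lemma hasDerivAt_absSinPrimitive (x : ℝ) : HasDerivAt absSinPrimitive |sin x| x :=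
  (continuous_sin.abs.integral_hasStrictDerivAt 0 x).hasDerivAt

lemma continuous_absSinPrimitive : Continuous absSinPrimitive :=
  continuous_iff_continuousAt.2 fun x => (hasDerivAt_absSinPrimitive x).continuousAt

-- `|sin|` vanishes only on the null set `πℤ`, so it has positive integral over every interval.
lemma absSinPrimitive_strictMono : StrictMono absSinPrimitive := by
  intro a b hab
  have hzeros : volume {x : ℝ | sin x = 0} = 0 :=
    measure_mono_null (fun x hx => sin_eq_zero_iff.1 hx) ((countable_range _).measure_zero _)
  have hpos : 0 < ∫ s in a..b, |sin s| := by
    rw [integral_pos_iff_support_of_nonneg_ae (.of_forall fun _ => abs_nonneg _)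
      (continuous_sin.abs.intervalIntegrable a b)]
    refine ⟨hab, ?_⟩
    calc (0 : ENNReal) < volume (Ioc a b) := by simp [hab]
      _ = volume (Ioc a b \ {x | sin x = 0}) := (measure_sdiff_null hzeros).symm
      _ ≤ volume (Function.support (fun s => |sin s|) ∩ Ioc a b) :=
        measure_mono fun x ⟨hx, hx0⟩ => ⟨abs_ne_zero.2 hx0, hx⟩
  rw [← integral_interval_sub_left (continuous_sin.abs.intervalIntegrable 0 b)
    (continuous_sin.abs.intervalIntegrable 0 a)] at hpos
  exact sub_pos.1 hpos

lemma periodic_abs_sin : Function.Periodic (fun s => |sin s|) π := fun x => by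
  simp [sin_add_pi]

lemma integral_abs_sin_pos : 0 < ∫ s in (0 : ℝ)..π, |sin s| := by
  simpa [absSinPrimitive] using absSinPrimitive_strictMono pi_pos

lemma surjective_absSinPrimitive : Function.Surjective absSinPrimitive :=
  continuous_absSinPrimitive.surjective
    (periodic_abs_sin.tendsto_atTop_intervalIntegral_of_pos integral_abs_sin_pos pi_pos)
    (periodic_abs_sin.tendsto_atBot_intervalIntegral_of_pos integral_abs_sin_pos pi_pos)

lemma exists_tendsto_of_tendsto_absSinPrimitive_comp {α : Type*} {l : Filter α} {v : α → ℝ}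
    {c : ℝ} (h : Tendsto (fun x => absSinPrimitive (v x)) l (𝓝 c)) :
    ∃ L, Tendsto v l (𝓝 L) := by
  let e := absSinPrimitive_strictMono.orderIsoOfSurjective _ surjective_absSinPrimitive
  refine ⟨e.symm c, e.toHomeomorph.isEmbedding.tendsto_nhds_iff.2 ?_⟩
  simpa [e, Function.comp_def] using h

lemma exists_tendsto_nhdsGT_of_hasDerivAt_of_integrableOn_Ioc {E : Type*}
    [NormedAddCommGroup E] [NormedSpace ℝ E] [CompleteSpace E] {f f' : ℝ → E} {a b : ℝ}
    (hab : a < b) (hderiv : ∀ x ∈ Ioc a b, HasDerivAt f (f' x) x)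
    (hint : IntegrableOn f' (Ioc a b)) : ∃ L, Tendsto f (𝓝[>] a) (𝓝 L) := by
  have hprim : Tendsto (fun x => ∫ t in x..b, f' t) (𝓝[>] a) (𝓝 (∫ t in a..b, f' t)) := by
    have hcont := continuousOn_primitive_interval_left (f := f') (μ := volume) (a := a) (b := b)
      (by rwa [uIcc_of_le hab.le, integrableOn_Icc_iff_integrableOn_Ioc])
    rw [uIcc_of_le hab.le] at hcont
    have := (hcont a (left_mem_Icc.2 hab.le)).tendsto.mono_left
      (nhdsWithin_mono a Ioc_subset_Icc_self)
    rwa [nhdsWithin_Ioc_eq_nhdsGT hab] at this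
  refine ⟨f b - ∫ t in a..b, f' t, (tendsto_const_nhds.sub hprim).congr' ?_⟩
  filter_upwards [Ioc_mem_nhdsGT hab] with x hx
  rw [integral_eq_sub_of_hasDerivAt, sub_sub_cancel]
  · rw [uIcc_of_le hx.2]
    exact fun y hy => hderiv y ⟨hx.1.trans_le hy.1, hy.2⟩
  · rw [intervalIntegrable_iff_integrableOn_Ioc_of_le hx.2]
    exact hint.mono_set (Ioc_subset_Ioc_left hx.1.le)

lemma integrableOn_inv_of_integrableOn_div {v : ℝ → ℝ} {s : Set ℝ} {c : ℝ}
    (hs : MeasurableSet s) (hs₀ : s ⊆ Ioi 0) (hc : 0 < c) (hv : ∀ r ∈ s, c ≤ |v r|)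
    (hint : IntegrableOn (fun r => v r / r) s) : IntegrableOn (fun r => r⁻¹) s := by
  refine (integrable_const_mul_iff hc.ne'.isUnit _).1 (hint.norm.mono' ?_ ?_)
  · exact (measurable_inv.const_mul c).aestronglyMeasurable
  · refine ae_restrict_of_forall_mem hs fun r hr => ?_
    have hr₀ : 0 < r := hs₀ hr
    rw [norm_div, Real.norm_of_nonneg (by positivity), Real.norm_of_nonneg hr₀.le,
      div_eq_mul_inv, Real.norm_eq_abs]
    exact mul_le_mul_of_nonneg_right (hv r hr) (inv_nonneg.2 hr₀.le)

lemma eq_zero_of_tendsto_atTop_of_integrableOn_div {v : ℝ → ℝ} {c a : ℝ}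
    (hv : Tendsto v atTop (𝓝 c)) (hint : IntegrableOn (fun r => v r / r) (Ioi a)) : c = 0 := by
  by_contra hc
  have hlarge : ∀ᶠ r in atTop, |c| / 2 ≤ |v r| :=
    hv.abs.eventually_const_le (half_lt_self (abs_pos.2 hc))
  obtain ⟨R, hR⟩ := (hlarge.and (eventually_gt_atTop (max a 0))).exists_forall_of_atTop
  refine not_integrableOn_Ioi_inv (a := R) (integrableOn_inv_of_integrableOn_div measurableSet_Ioi
    (fun r hr => ?_) (half_pos (abs_pos.2 hc)) (fun r hr => (hR r (le_of_lt hr)).1)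
    (hint.mono_set fun r hr => ?_))
  · exact (le_max_right a 0).trans_lt ((hR R le_rfl).2.trans hr)
  · exact (le_max_left a 0).trans_lt ((hR R le_rfl).2.trans hr)

lemma eq_zero_of_tendsto_nhdsGT_of_integrableOn_div {v : ℝ → ℝ} {c b : ℝ} (hb : 0 < b)
    (hv : Tendsto v (𝓝[>] 0) (𝓝 c)) (hint : IntegrableOn (fun r => v r / r) (Ioc 0 b)) :
    c = 0 := by
  by_contra hc
  have hsmall : ∀ᶠ r in 𝓝[>] 0, |c| / 2 ≤ |v r| :=
    hv.abs.eventually_const_le (half_lt_self (abs_pos.2 hc))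
  obtain ⟨ε, hε, hsub⟩ := mem_nhdsGT_iff_exists_Ioc_subset.1 (hsmall.and (Ioc_mem_nhdsGT hb))
  have hinv : IntegrableOn (fun r : ℝ => r⁻¹) (Ioc 0 ε) :=
    integrableOn_inv_of_integrableOn_div measurableSet_Ioc (fun r hr => hr.1)
      (half_pos (abs_pos.2 hc)) (fun r hr => (hsub hr).1)
      (hint.mono_set fun r hr => (hsub hr).2)
  have := (intervalIntegrable_iff_integrableOn_Ioc_of_le (le_of_lt hε)).2 hinv
  simp [intervalIntegrable_inv_iff, (mem_Ioi.1 hε).ne] at this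

noncomputable def energyDensity (u : ℝ → ℝ) (r : ℝ) : ℝ :=
  (deriv u r ^ 2 + sin (u r) ^ 2 / r ^ 2) * r

lemma two_mul_abs_mul_le_sq_add_sq_div_sq_mul {a b r : ℝ} (hr : 0 < r) :
    2 * |a * b| ≤ (b ^ 2 + a ^ 2 / r ^ 2) * r := by
  have h : (b ^ 2 + a ^ 2 / r ^ 2) * r - 2 * |a * b| = (|b| * r - |a|) ^ 2 / r := by
    rw [abs_mul]
    field_simp
    rw [← sq_abs a, ← sq_abs b]
    ring
  have : 0 ≤ (|b| * r - |a|) ^ 2 / r := by positivity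
  linarith

section energy

variable {u : ℝ → ℝ}

lemma hasDerivAt_absSinPrimitive_comp (hu : ContDiffOn ℝ 1 u (Ioi 0)) {r : ℝ} (hr : 0 < r) :
    HasDerivAt (fun r => absSinPrimitive (u r)) (|sin (u r)| * deriv u r) r :=
  (hasDerivAt_absSinPrimitive (u r)).comp r
    ((hu.differentiableOn one_ne_zero).differentiableAt (Ioi_mem_nhds hr)).hasDerivAt

lemma integrableOn_abs_sin_mul_deriv (hu : ContDiffOn ℝ 1 u (Ioi 0))
    (hE : IntegrableOn (energyDensity u) (Ioi 0)) :
    IntegrableOn (fun r => |sin (u r)| * deriv u r) (Ioi 0) := by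
  refine (hE.const_mul (1 / 2)).mono' ?_ (ae_restrict_of_forall_mem measurableSet_Ioi fun r hr => ?_)
  · exact ((continuous_sin.comp_continuousOn hu.continuousOn).abs.mul
      (hu.continuousOn_deriv_of_isOpen isOpen_Ioi le_rfl)).aestronglyMeasurable measurableSet_Ioi
  · have := two_mul_abs_mul_le_sq_add_sq_div_sq_mul (a := sin (u r)) (b := deriv u r) hr
    rw [Real.norm_eq_abs, abs_mul, abs_abs, ← abs_mul, energyDensity]
    linarith

lemma integrableOn_sin_sq_div (hu : ContDiffOn ℝ 1 u (Ioi 0))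
    (hE : IntegrableOn (energyDensity u) (Ioi 0)) :
    IntegrableOn (fun r => sin (u r) ^ 2 / r) (Ioi 0) := by
  refine hE.mono' ?_ (ae_restrict_of_forall_mem measurableSet_Ioi fun r (hr : 0 < r) => ?_)
  · exact (((continuous_sin.comp_continuousOn hu.continuousOn).pow 2).div continuousOn_id
      fun r hr => (mem_Ioi.1 hr).ne').aestronglyMeasurable measurableSet_Ioi
  · have h : energyDensity u r = deriv u r ^ 2 * r + sin (u r) ^ 2 / r := by
      rw [energyDensity]
      field_simp
    rw [Real.norm_of_nonneg (by positivity), h]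
    nlinarith [sq_nonneg (deriv u r)]

end energy

theorem stmt17 (u : ℝ → ℝ)
    (hu : ContDiffOn ℝ 1 u (Set.Ioi 0))
    (hE : IntegrableOn
      (fun r : ℝ => ((deriv u r) ^ 2 + Real.sin (u r) ^ 2 / r ^ 2) * r) (Set.Ioi 0)) :
    ∃ L₀ Linf : ℝ,
      Filter.Tendsto u (nhdsWithin 0 (Set.Ioi 0)) (nhds L₀) ∧
      Filter.Tendsto u Filter.atTop (nhds Linf) ∧
      (∃ m : ℤ, L₀ = m * π) ∧ (∃ n : ℤ, Linf = n * π) := by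
  have hderiv : ∀ r ∈ Ioi (0 : ℝ),
      HasDerivAt (fun r => absSinPrimitive (u r)) (|sin (u r)| * deriv u r) r :=
    fun r hr => hasDerivAt_absSinPrimitive_comp hu hr
  have hint := integrableOn_abs_sin_mul_deriv hu hE
  obtain ⟨L₀, hL₀⟩ : ∃ L, Tendsto u (𝓝[>] 0) (𝓝 L) := by
    obtain ⟨c, hc⟩ := exists_tendsto_nhdsGT_of_hasDerivAt_of_integrableOn_Ioc one_pos
      (fun r hr => hderiv r hr.1) (hint.mono_set Ioc_subset_Ioi_self)
    exact exists_tendsto_of_tendsto_absSinPrimitive_comp hc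
  obtain ⟨Linf, hLinf⟩ : ∃ L, Tendsto u atTop (𝓝 L) :=
    exists_tendsto_of_tendsto_absSinPrimitive_comp
      (tendsto_limUnder_of_hasDerivAt_of_integrableOn_Ioi hderiv hint)
  have hsq {l : Filter ℝ} {L : ℝ} (h : Tendsto u l (𝓝 L)) :
      Tendsto (fun r => sin (u r) ^ 2) l (𝓝 (sin L ^ 2)) :=
    ((continuous_sin.tendsto L).comp h).pow 2
  have hpi {x : ℝ} (h : sin x ^ 2 = 0) : ∃ n : ℤ, x = n * π := by
    obtain ⟨n, hn⟩ := sin_eq_zero_iff.1 (pow_eq_zero_iff two_ne_zero |>.1 h)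
    exact ⟨n, hn.symm⟩
  have hsin := integrableOn_sin_sq_div hu hE
  refine ⟨L₀, Linf, hL₀, hLinf, hpi ?_, hpi ?_⟩
  · exact eq_zero_of_tendsto_nhdsGT_of_integrableOn_div one_pos (hsq hL₀)
      (hsin.mono_set Ioc_subset_Ioi_self)
  · exact eq_zero_of_tendsto_atTop_of_integrableOn_div (hsq hLinf) hsin
end
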